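/- Let x_i, x_j, x_k, t_i, t_j, t_k, P ∈ ℝ³ and D ∈ ℝ, with d = ‖x_i - x_j‖ > 0; set u = (x_i - x_j)/d, ω = ((t_j - t_i) × u)/d, d' = (x_k - D·x_j + (D - 1)·x_i)/d, and T = t_k - t_i - ω × (x_k - x_i) - D·(t_j - t_i - ω × (x_j - x_i)). Then ⟨T, x_k - P⟩ = ⟨a, t_k⟩ + ⟨b, t_j⟩ + ⟨c, t_i⟩, where a = x_k - P, b = (-D + ⟨u, d'⟩)·(x_k - P) - ⟨x_k - P, u⟩·d', and c = (D - 1 - ⟨u, d'⟩)·(x_k - P) + ⟨x_k - P, u⟩·d'. -/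

import Mathlib

/-!
With `ω = (1/d) • ((tⱼ - tᵢ) × u)`, the two rotation terms of `T` combine by bilinearity into
`((tⱼ - tᵢ) × u) × d'`, the factor `1/d` moving from `ω` onto `d'`. The vector triple product
expansion turns the pairing of this vector with `x_k - P` into a pairing of `tⱼ - tᵢ` with
`⟨u, x_k - P⟩ d' - ⟨u, d'⟩ (x_k - P)`; collecting the coefficients of `t_k`, `tⱼ`, `tᵢ` gives
`a`, `b`, `c`.
-/

open Matrix

section CrossProduct

variable {R : Type*} [CommRing R]

theorem smul_cross_eq_cross_smul (r : R) (v w : Fin 3 → R) : (r • v) ⨯₃ w = v ⨯₃ (r • w) := by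
  rw [LinearMap.map_smul₂, map_smul]

theorem cross_cross_dotProduct (w u e p : Fin 3 → R) :
    w ⨯₃ u ⨯₃ e ⬝ᵥ p = w ⬝ᵥ ((u ⬝ᵥ p) • e - (u ⬝ᵥ e) • p) := by
  simp only [cross_cross_eq_smul_sub_smul, sub_dotProduct, dotProduct_sub, smul_dotProduct,
    dotProduct_smul, smul_eq_mul, dotProduct_comm w p]
  ring

theorem sub_cross_cross_dotProduct_eq (ti tj tk u e p : Fin 3 → R) (D : R) :
    (tk - ti - D • (tj - ti) - (tj - ti) ⨯₃ u ⨯₃ e) ⬝ᵥ p =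
      p ⬝ᵥ tk + ((-D + u ⬝ᵥ e) • p - (p ⬝ᵥ u) • e) ⬝ᵥ tj
        + ((D - 1 - u ⬝ᵥ e) • p + (p ⬝ᵥ u) • e) ⬝ᵥ ti := by
  rw [sub_dotProduct, cross_cross_dotProduct]
  simp only [sub_dotProduct, dotProduct_sub, add_dotProduct, smul_dotProduct, dotProduct_smul,
    smul_eq_mul]
  rw [dotProduct_comm p tk, dotProduct_comm p tj, dotProduct_comm p ti, dotProduct_comm e tj,
    dotProduct_comm e ti, dotProduct_comm u p]
  ring

end CrossProduct

theorem corner_contribution_decomposition_general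
    (xi xj xk ti tj tk P : Fin 3 → ℝ) (D d : ℝ)
    (u ω d' T a b c : Fin 3 → ℝ)
    (hω : ω = (1 / d) • ((tj - ti) ⨯₃ u))
    (hd' : d' = (1 / d) • (xk - D • xj + (D - 1) • xi))
    (hT : T = tk - ti - ω ⨯₃ (xk - xi) - D • (tj - ti - ω ⨯₃ (xj - xi)))
    (ha : a = xk - P)
    (hb : b = (-D + u ⬝ᵥ d') • (xk - P) - ((xk - P) ⬝ᵥ u) • d')
    (hc : c = (D - 1 - u ⬝ᵥ d') • (xk - P) + ((xk - P) ⬝ᵥ u) • d') :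
    T ⬝ᵥ (xk - P) = a ⬝ᵥ tk + b ⬝ᵥ tj + c ⬝ᵥ ti := by
  have hrot : ω ⨯₃ (xk - xi) - D • ω ⨯₃ (xj - xi) = (tj - ti) ⨯₃ u ⨯₃ d' := by
    rw [← map_smul, ← map_sub, hω, hd', smul_cross_eq_cross_smul]
    congr 2
    module
  have hT' : T = tk - ti - D • (tj - ti) - (tj - ti) ⨯₃ u ⨯₃ d' := by
    rw [hT, ← hrot]
    module
  rw [hT', ha, hb, hc]
  exact sub_cross_cross_dotProduct_eq ti tj tk u d' (xk - P) D

/-- The contribution `⟨T_ijk, x_k - P⟩` of the modified motion at a corner `P`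
decomposes into terms linear in the individual velocity vectors `tᵢ, tⱼ, t_k`,
with the auxiliary gradient vectors `a`, `b`, `c`. -/
theorem corner_contribution_decomposition
    (xi xj xk ti tj tk P : Fin 3 → ℝ) (D d : ℝ)
    (hd : d = Real.sqrt ((xi - xj) ⬝ᵥ (xi - xj))) (hd0 : 0 < d)
    (u ω d' T a b c : Fin 3 → ℝ)
    (hu : u = (1 / d) • (xi - xj))
    (hω : ω = (1 / d) • ((tj - ti) ⨯₃ u))
    (hd' : d' = (1 / d) • (xk - D • xj + (D - 1) • xi))
    (hT : T = tk - ti - ω ⨯₃ (xk - xi) - D • (tj - ti - ω ⨯₃ (xj - xi)))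
    (ha : a = xk - P)
    (hb : b = (-D + u ⬝ᵥ d') • (xk - P) - ((xk - P) ⬝ᵥ u) • d')
    (hc : c = (D - 1 - u ⬝ᵥ d') • (xk - P) + ((xk - P) ⬝ᵥ u) • d') :
    T ⬝ᵥ (xk - P) = a ⬝ᵥ tk + b ⬝ᵥ tj + c ⬝ᵥ ti :=
  corner_contribution_decomposition_general xi xj xk ti tj tk P D d u ω d' T a b c hω hd' hT ha hb
    hc
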